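/- arXiv:1602.00421 — 2 statements merged into one kernel-verified Lean document; each statement's English description precedes it below -/
import Mathlib

section
/- Let R be a Noetherian ring of prime characteristic p with finite F-representation type by modules M_1, …, M_s. Then every localization S⁻¹R of R has finite F-representation type, witnessed by the localized modules S⁻¹M_1, …, S⁻¹M_s. -/
/-!
Restriction of scalars along the Frobenius commutes with localization: writing `q = p ^ e`,
every `s ∈ S` divides `s ^ q ∈ S`, so the map `ᵉR → ᵉ(S⁻¹R)` is a localization at `S`.
Localizing the decomposition `ᵉR ≅ ⊕ᵢ Mᵢ ^ nᵢ`, which commutes with finite direct sums, gives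
an `R`-linear isomorphism `ᵉ(S⁻¹R) ≅ ⊕ᵢ (S⁻¹Mᵢ) ^ nᵢ` between `S⁻¹R`-modules, and such an
isomorphism is automatically `S⁻¹R`-linear.
-/

/-- `R` has finite `F`-representation type witnessed by the modules `M i`. -/
def HasFiniteFRepType (R : Type) [CommRing R] (p : ℕ) [ExpChar R p]
    (s : ℕ) (M : Fin s → Type) [∀ i, AddCommGroup (M i)] [∀ i, Module R (M i)] : Prop :=
  ∀ e : ℕ, ∃ n : Fin s → ℕ, Nonempty
    (((ModuleCat.restrictScalars (iterateFrobenius R p e)).obj (ModuleCat.of R R)) ≃ₗ[R]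
      DirectSum (Fin s) fun i => Fin (n i) → M i)

universe u

namespace IsLocalizedModule

variable {R : Type*} [CommRing R] (S : Submonoid R)

attribute [local instance] IsLocalizedModule.isScalarTower_module in
instance directSum_lmap {ι : Type*} [DecidableEq ι]
    {M M' : ι → Type*} [∀ i, AddCommMonoid (M i)] [∀ i, AddCommMonoid (M' i)]
    [∀ i, Module R (M i)] [∀ i, Module R (M' i)]
    (f : ∀ i, M i →ₗ[R] M' i) [∀ i, IsLocalizedModule S (f i)] :
    IsLocalizedModule S (DirectSum.lmap f) := by
  let (i : ι) : Module (Localization S) (M' i) := IsLocalizedModule.module S (f i)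
  rw [isLocalizedModule_iff_isBaseChange S (Localization S)]
  exact IsBaseChange.directSum fun i =>
    (isLocalizedModule_iff_isBaseChange S (Localization S) (f i)).mp inferInstance

theorem restrictScalars_map {φ : R →+* R} (hφ : ∀ s ∈ S, φ s ∈ S ∧ s ∣ φ s)
    {M N : Type u} [AddCommGroup M] [Module R M] [AddCommGroup N] [Module R N]
    (f : M →ₗ[R] N) [IsLocalizedModule S f] :
    IsLocalizedModule S ((ModuleCat.restrictScalars φ).map (ModuleCat.ofHom f)).hom where
  map_units t := by
    have := map_units f ⟨φ t, (hφ t t.2).1⟩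
    rw [Module.End.isUnit_iff] at this ⊢
    exact this
  surj y := by
    obtain ⟨⟨x, t⟩, hx⟩ := surj S f (show N from y)
    obtain ⟨c, hc⟩ := (hφ t t.2).2
    refine ⟨⟨show M from c • x, t⟩, ?_⟩
    change φ t • (show N from y) = f (c • x)
    rw [hc, mul_comm, mul_smul, map_smul, ← hx]
    rfl
  exists_of_eq {x₁ x₂} h := by
    obtain ⟨c, hc⟩ := exists_of_eq (S := S) (f := f) h
    obtain ⟨d, hd⟩ := (hφ c c.2).2
    refine ⟨c, ?_⟩
    change φ c • (show M from x₁) = φ c • (show M from x₂)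
    rw [hd, mul_comm, mul_smul, mul_smul]
    exact congrArg (d • ·) hc

end IsLocalizedModule

open ModuleCat.Algebra in
/-- The identity of `A`: on both sides `r : R` acts by `algebraMap R A r ^ p ^ e`. -/
noncomputable def restrictScalarsIterateFrobeniusEquiv {R : Type*} [CommRing R]
    (A : Type*) [CommRing A] [Algebra R A] (p : ℕ) [ExpChar R p] [ExpChar A p] (e : ℕ) :
    (ModuleCat.restrictScalars (iterateFrobenius R p e)).obj (ModuleCat.of R A) ≃ₗ[R]
      (ModuleCat.restrictScalars (iterateFrobenius A p e)).obj (ModuleCat.of A A) where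
  __ := AddEquiv.refl A
  map_smul' r y := by
    change (r ^ p ^ e) • (show A from y) = algebraMap R A r ^ p ^ e * (show A from y)
    rw [Algebra.smul_def, map_pow]

theorem stmt9_general (R : Type) [CommRing R] (p : ℕ) [Fact p.Prime] [CharP R p]
    (s : ℕ) (M : Fin s → Type) [∀ i, AddCommGroup (M i)] [∀ i, Module R (M i)]
    (hffrt : HasFiniteFRepType R p s M)
    (S : Submonoid R) [CharP (Localization S) p] :
    HasFiniteFRepType (Localization S) p s (fun i => LocalizedModule S (M i)) := by
  open ModuleCat.Algebra in
  intro e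
  obtain ⟨n, ⟨φ⟩⟩ := hffrt e
  have hfrob : ∀ t ∈ S, iterateFrobenius R p e t ∈ S ∧ t ∣ iterateFrobenius R p e t :=
    fun t ht => ⟨pow_mem ht _, dvd_pow_self t (expChar_pow_pos R p e).ne'⟩
  let g := (restrictScalarsIterateFrobeniusEquiv (R := R) (Localization S) p e).toLinearMap ∘ₗ
    ((ModuleCat.restrictScalars (iterateFrobenius R p e)).map
      (ModuleCat.ofHom (Algebra.linearMap R (Localization S)))).hom
  have : IsLocalizedModule S g := by
    have := IsLocalizedModule.restrictScalars_map S hfrob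
      (Algebra.linearMap R (Localization S))
    exact IsLocalizedModule.of_linearEquiv S _ _
  let F := DirectSum.lmap (fun i => LinearMap.pi fun j : Fin (n i) =>
    LocalizedModule.mkLinearMap S (M i) ∘ₗ LinearMap.proj j) ∘ₗ φ.toLinearMap
  have : IsLocalizedModule S F := IsLocalizedModule.of_linearEquiv_right S _ φ
  exact ⟨n, ⟨(IsLocalizedModule.linearEquiv S g F).extendScalarsOfIsLocalization S _⟩⟩

/-- If a Noetherian ring `R` of prime characteristic `p` has finite
`F`-representation type witnessed by `M_1, …, M_s`, then any localization `S⁻¹R` has finite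
`F`-representation type witnessed by the localized modules `S⁻¹M_1, …, S⁻¹M_s`. -/
theorem stmt9 (R : Type) [CommRing R] [IsNoetherianRing R] (p : ℕ) [Fact p.Prime] [CharP R p]
    (s : ℕ) (M : Fin s → Type) [∀ i, AddCommGroup (M i)] [∀ i, Module R (M i)]
    [∀ i, Module.Finite R (M i)] (hffrt : HasFiniteFRepType R p s M)
    (S : Submonoid R) [CharP (Localization S) p] :
    HasFiniteFRepType (Localization S) p s (fun i => LocalizedModule S (M i)) :=
  stmt9_general R p s M hffrt S
end

section
/- Let R be a Noetherian local normal domain of dimension ≥ 3 satisfying: every reflexive ideal of R has depth ≥ 3 (condition (D3)). Let x, y be elements of R forming part of a system of parameters, and n ≥ 1. Then the maximal ideal of R is not an associated prime of R/(x^n, y^n). -/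
/-!
Write `J = (a : b)` and read `m ∉ Ass M` as `depth M ≥ 1`. Multiplication by `b` gives an exact
sequence `0 → R ⧸ J → R ⧸ (a) → R ⧸ (a, b) → 0`, and the depth lemma (if `0 → A → B → C → 0` is
exact, `depth B ≥ 1` and `depth A ≥ 2`, then `depth C ≥ 1`) reduces the claim to
`depth R ⧸ (a) ≥ 1` and `depth R ⧸ J ≥ 2`. Condition (D3), applied to the reflexive ideals `R`
and `J`, gives `depth R ≥ 3` and `depth J ≥ 3`; the first yields `depth R ⧸ (a) ≥ 2`. For the
second, prime avoidance gives `u ∈ m`, regular on `R ⧸ J` and on `R`, such that `u, p₁, p₂` is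
`J`-regular for some `p₁, p₂ ∈ m`; the depth lemma for `0 → J ⧸ uJ → R ⧸ uR → (R ⧸ J) ⧸ u → 0`
then gives `depth (R ⧸ J) ⧸ u ≥ 1`. In any domain `J` is reflexive, because a functional on `J`
is determined by its value at `a`.
-/

/-- The depth of a module over a Noetherian local ring: the supremum of lengths of
regular sequences on `M` consisting of elements of the maximal ideal. -/
noncomputable def moduleDepth (R : Type) [CommRing R] [IsLocalRing R]
    (M : Type) [AddCommGroup M] [Module R M] : ℕ∞ :=
  sSup {n : ℕ∞ | ∃ rs : List R, (rs.length : ℕ∞) = n ∧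
    (∀ r ∈ rs, r ∈ IsLocalRing.maximalIdeal R) ∧ RingTheory.Sequence.IsRegular M rs}

open Function Pointwise RingTheory.Sequence

section AssociatedPrimes

variable {R : Type*} [CommRing R] {M : Type*} [AddCommGroup M] [Module R M]

theorem notMem_associatedPrimes_of_isSMulRegular {p : Ideal R} {u : R} (hu : u ∈ p)
    (hreg : IsSMulRegular M u) : p ∉ associatedPrimes R M := by
  rintro ⟨hp, x, rfl⟩
  obtain ⟨k, hk⟩ := hu
  have hx : x = 0 := (hreg.pow k).right_eq_zero_of_smul (by simpa using hk)
  exact hp.ne_top (by simp [hx])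

variable [IsNoetherianRing R]

theorem notMem_associatedPrimes_iff_of_isMaximal (m : Ideal R) [hm : m.IsMaximal] :
    m ∉ associatedPrimes R M ↔ ∀ x : M, (∀ r ∈ m, r • x = 0) → x = 0 := by
  constructor
  · intro h x hx
    by_contra hx0
    refine h ⟨hm.isPrime, x, ?_⟩
    have hle : m ≤ (⊥ : Submodule R M).colon {x} := fun r hr => by simpa using hx r hr
    rw [← hm.eq_of_le (by simpa using hx0) hle, hm.isPrime.radical]
  · rintro h hass
    obtain ⟨-, x, hx⟩ := isAssociatedPrime_iff.mp hass
    have hx0 : x = 0 := h x fun r hr => by simpa [hx] using hr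
    exact hm.ne_top (by simpa [hx0, Submodule.colon_singleton_zero] using hx)

theorem exists_mem_isSMulRegular_of_forall_not_le [Module.Finite R M] {I : Ideal R}
    (h : ∀ p ∈ associatedPrimes R M, ¬ I ≤ p) : ∃ u ∈ I, IsSMulRegular M u := by
  by_contra! hI
  have hfin := associatedPrimes.finite R M
  have hcover : (I : Set R) ⊆ ⋃ p ∈ (hfin.toFinset : Set (Ideal R)), (id p : Set R) := by
    intro u hu
    have : u ∈ ⋃ p ∈ associatedPrimes R M, (p : Set R) := by
      rw [biUnion_associatedPrimes_eq_compl_regular]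
      exact hI u hu
    simpa using this
  obtain ⟨p, hp, hle⟩ := (Ideal.subset_union_prime ⊥ ⊥ fun p hp _ _ =>
    (hfin.mem_toFinset.mp hp).isPrime).mp hcover
  exact h p (hfin.mem_toFinset.mp hp) hle

end AssociatedPrimes

section Colon

open Submodule

variable {R : Type*} [CommRing R] {M : Type*} [AddCommGroup M] [Module R M]
  (N : Submodule R M) (x : M)

theorem Submodule.colon_singleton_eq_ker :
    N.colon {x} = LinearMap.ker (N.mkQ ∘ₗ LinearMap.toSpanSingleton R M x) := by
  ext r
  simp [← Quotient.mk_smul]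

noncomputable def Submodule.quotColonSingletonMap : R ⧸ N.colon {x} →ₗ[R] M ⧸ N :=
  (N.colon {x}).liftQ _ (N.colon_singleton_eq_ker x).le

theorem Submodule.quotColonSingletonMap_mk (r : R) :
    N.quotColonSingletonMap x (Quotient.mk r) = Quotient.mk (r • x) := rfl

theorem Submodule.quotColonSingletonMap_injective : Injective (N.quotColonSingletonMap x) :=
  LinearMap.ker_eq_bot.mp (ker_liftQ_eq_bot' _ _ (N.colon_singleton_eq_ker x))

theorem Submodule.exact_quotColonSingletonMap_factor :
    Exact (N.quotColonSingletonMap x) (factor (le_sup_left : N ≤ N ⊔ span R {x})) := by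
  intro y
  induction y using Submodule.Quotient.induction_on with | _ z => ?_
  rw [Set.mem_range, (Quotient.mk_surjective _).exists]
  change (Quotient.mk z : M ⧸ (N ⊔ span R {x})) = 0 ↔ _
  rw [Quotient.mk_eq_zero, mem_sup]
  simp only [mem_span_singleton, quotColonSingletonMap_mk, Quotient.eq]
  constructor
  · rintro ⟨n, hn, _, ⟨r, rfl⟩, rfl⟩
    exact ⟨r, by simpa using N.neg_mem hn⟩
  · rintro ⟨r, hr⟩
    exact ⟨_, N.neg_mem hr, r • x, ⟨r, rfl⟩, by abel⟩

theorem QuotSMulTop.map_subtype_injective {u : R} (hu : IsSMulRegular (M ⧸ N) u) :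
    Injective (QuotSMulTop.map u N.subtype) := by
  have := QuotSMulTop.map_first_exact_on_four_term_exact_of_isSMulRegular_last
    ((LinearMap.exact_zero_iff_injective N N.subtype).mpr N.injective_subtype)
    (LinearMap.exact_subtype_mkQ N) hu
  rwa [map_zero, LinearMap.exact_zero_iff_injective] at this

end Colon

section DepthLemma

variable {R : Type*} [CommRing R] [IsNoetherianRing R] {m : Ideal R} [m.IsMaximal]
  {A B C M : Type*} [AddCommGroup A] [Module R A] [AddCommGroup B] [Module R B]
  [AddCommGroup C] [Module R C] [AddCommGroup M] [Module R M]

theorem notMem_associatedPrimes_of_exact {f : A →ₗ[R] B} {g : B →ₗ[R] C}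
    (hf : Injective f) (hfg : Exact f g) (hg : Surjective g) {u : R} (hu : u ∈ m)
    (hA : IsSMulRegular A u) (hAu : m ∉ associatedPrimes R (QuotSMulTop u A))
    (hB : m ∉ associatedPrimes R B) : m ∉ associatedPrimes R C := by
  rw [notMem_associatedPrimes_iff_of_isMaximal] at hAu hB ⊢
  intro c hc
  obtain ⟨b, rfl⟩ := hg c
  have hlift : ∀ r ∈ m, ∃ α, f α = r • b := fun r hr => (hfg _).mp (by rw [map_smul, hc r hr])
  choose! α hα using hlift
  have hswap : ∀ r ∈ m, r • α u = u • α r := fun r hr =>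
    hf (by rw [map_smul, map_smul, hα u hu, hα r hr, smul_comm])
  obtain ⟨a₀, -, ha₀⟩ : ∃ a₀ ∈ (⊤ : Submodule R A), u • a₀ = α u := by
    rw [← Submodule.mem_smul_pointwise_iff_exists, ← Submodule.Quotient.mk_eq_zero]
    refine hAu _ fun r hr => ?_
    rw [← Submodule.Quotient.mk_smul, hswap r hr, Submodule.Quotient.mk_eq_zero]
    exact Submodule.smul_mem_pointwise_smul _ _ _ trivial
  have hα_eq : ∀ r ∈ m, α r = r • a₀ := fun r hr =>
    sub_eq_zero.mp <| hA.right_eq_zero_of_smul <| by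
      rw [smul_sub, ← hswap r hr, ← ha₀, smul_comm, sub_self]
  have hb : b = f a₀ := sub_eq_zero.mp <| hB _ fun r hr => by
    rw [smul_sub, ← hα r hr, hα_eq r hr, map_smul, sub_self]
  rw [hb]
  exact hfg.apply_apply_eq_zero a₀

theorem notMem_associatedPrimes_quotSMulTop {u c : R} (hu : u ∈ m)
    (hMu : IsSMulRegular M u) (hMuQ : m ∉ associatedPrimes R (QuotSMulTop u M))
    (hc : IsSMulRegular M c) : m ∉ associatedPrimes R (QuotSMulTop c M) :=
  notMem_associatedPrimes_of_exact (f := LinearMap.lsmul R M c) hc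
    (LinearMap.exact_lsmul_mkQ_smul_top M c) (Submodule.mkQ_surjective _) hu hMu hMuQ
    (notMem_associatedPrimes_of_isSMulRegular hu hMu)

theorem notMem_associatedPrimes_quotSMulTop_quotient {N : Submodule R M} {u p : R}
    (hMN : IsSMulRegular (M ⧸ N) u) (hM : m ∉ associatedPrimes R (QuotSMulTop u M))
    (hp : p ∈ m) (hNp : IsSMulRegular (QuotSMulTop u N) p)
    (hNpQ : m ∉ associatedPrimes R (QuotSMulTop p (QuotSMulTop u N))) :
    m ∉ associatedPrimes R (QuotSMulTop u (M ⧸ N)) :=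
  notMem_associatedPrimes_of_exact (QuotSMulTop.map_subtype_injective N hMN)
    (QuotSMulTop.map_exact u (LinearMap.exact_subtype_mkQ N) N.mkQ_surjective)
    (QuotSMulTop.map_surjective u N.mkQ_surjective) hp hNp hNpQ hM

theorem notMem_associatedPrimes_quotient_sup_span_singleton {N : Submodule R M} {x : M} {u : R}
    (hu : u ∈ m) (hreg : IsSMulRegular (R ⧸ N.colon {x}) u)
    (hQ : m ∉ associatedPrimes R (QuotSMulTop u (R ⧸ N.colon {x})))
    (hN : m ∉ associatedPrimes R (M ⧸ N)) :
    m ∉ associatedPrimes R (M ⧸ (N ⊔ Submodule.span R {x})) :=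
  notMem_associatedPrimes_of_exact (N.quotColonSingletonMap_injective x)
    (N.exact_quotColonSingletonMap_factor x) (Submodule.factor_surjective _) hu hreg hQ hN

end DepthLemma

theorem Ideal.isReflexive_span_singleton_colon {R : Type*} [CommRing R] [IsDomain R] {a : R}
    (ha : a ≠ 0) (S : Set R) : Module.IsReflexive R ((Ideal.span {a}).colon S) := by
  set J := (Ideal.span {a}).colon S
  have haJ : a ∈ J := Submodule.mem_colon.mpr fun s _ =>
    Ideal.mem_span_singleton'.mpr ⟨s, mul_comm s a⟩
  let a' : J := ⟨a, haJ⟩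
  have hdual : ∀ φ : Module.Dual R J, a • φ = φ a' • J.subtype := fun φ => by
    ext r
    have hr : a • r = (r : R) • a' := Subtype.ext (mul_comm _ _)
    simp only [LinearMap.smul_apply, Submodule.subtype_apply, ← map_smul, hr]
    rw [map_smul, smul_eq_mul, smul_eq_mul, mul_comm]
  -- `j ↦ j * s / a`
  have hμ : ∀ s ∈ S, ∃ μ : Module.Dual R J, μ a' = s := fun s hs => by
    let ψ : J →ₗ[R] Ideal.span {a} := (LinearMap.mulRight R s ∘ₗ J.subtype).codRestrict _
      fun j => Submodule.mem_colon.mp j.2 s hs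
    refine ⟨(LinearEquiv.toSpanNonzeroSingleton R R a ha).symm ∘ₗ ψ, ?_⟩
    apply (LinearEquiv.toSpanNonzeroSingleton R R a ha).injective
    rw [LinearMap.comp_apply, LinearEquiv.coe_coe, LinearEquiv.apply_symm_apply]
    exact Subtype.ext (mul_comm a s)
  refine ⟨⟨fun j j' h => Subtype.ext (by simpa using LinearMap.congr_fun h J.subtype),
    fun F => ?_⟩⟩
  have hF : ∀ φ, a * F φ = φ a' * F J.subtype := fun φ => by
    rw [← smul_eq_mul, ← map_smul, hdual, map_smul, smul_eq_mul]
  have ht : F J.subtype ∈ J := Submodule.mem_colon.mpr fun s hs => by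
    obtain ⟨μ, hμa⟩ := hμ s hs
    exact Ideal.mem_span_singleton'.mpr ⟨F μ, by rw [mul_comm, hF, hμa, smul_eq_mul, mul_comm]⟩
  refine ⟨⟨_, ht⟩, LinearMap.ext fun φ => mul_left_cancel₀ ha ?_⟩
  have := LinearMap.congr_fun (hdual φ) ⟨_, ht⟩
  simp only [LinearMap.smul_apply, Submodule.subtype_apply, smul_eq_mul] at this
  rw [Module.Dual.eval_apply, this, hF, mul_comm]

section Depth

open IsLocalRing

variable {R : Type} [CommRing R] [IsLocalRing R] {M : Type} [AddCommGroup M] [Module R M]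

theorem LinearEquiv.moduleDepth_eq {N : Type} [AddCommGroup N] [Module R N] (e : M ≃ₗ[R] N) :
    moduleDepth R M = moduleDepth R N := by
  simp only [moduleDepth, e.isRegular_congr]

theorem exists_isWeaklyRegular_of_le_moduleDepth {n : ℕ} (h : n ≤ moduleDepth R M) :
    ∃ rs : List R, rs.length = n ∧ (∀ r ∈ rs, r ∈ maximalIdeal R) ∧ IsWeaklyRegular M rs := by
  rcases n with _ | n
  · exact ⟨[], rfl, by simp, .nil R M⟩
  obtain ⟨_, ⟨rs, rfl, hmem, hreg⟩, hlt⟩ :=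
    lt_sSup_iff.mp (lt_of_lt_of_le (Nat.cast_lt.mpr n.lt_succ_self) h)
  have hlen : n + 1 ≤ rs.length := Nat.cast_lt.mp hlt
  refine ⟨rs.take (n + 1), List.length_take_of_le hlen,
    fun r hr => hmem r (List.mem_of_mem_take hr), ?_⟩
  have hreg := hreg.toIsWeaklyRegular
  rw [← List.take_append_drop (n + 1) rs, isWeaklyRegular_append_iff] at hreg
  exact hreg.1

theorem maximalIdeal_notMem_associatedPrimes_of_one_le_moduleDepth
    (h : 1 ≤ moduleDepth R M) : maximalIdeal R ∉ associatedPrimes R M := by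
  obtain ⟨rs, hlen, hmem, hreg⟩ := exists_isWeaklyRegular_of_le_moduleDepth h
  obtain ⟨u, rfl⟩ := List.length_eq_one_iff.mp hlen
  exact notMem_associatedPrimes_of_isSMulRegular (hmem u (by simp))
    ((isWeaklyRegular_singleton_iff M u).mp hreg)

variable [IsNoetherianRing R]

theorem maximalIdeal_notMem_associatedPrimes_quotSMulTop_of_two_le_moduleDepth
    (h : 2 ≤ moduleDepth R M) {c : R} (hc : IsSMulRegular M c) :
    maximalIdeal R ∉ associatedPrimes R (QuotSMulTop c M) := by
  obtain ⟨rs, hlen, hmem, hreg⟩ := exists_isWeaklyRegular_of_le_moduleDepth h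
  obtain ⟨u, v, rfl⟩ := List.length_eq_two.mp hlen
  rw [isWeaklyRegular_cons_iff, isWeaklyRegular_singleton_iff] at hreg
  exact notMem_associatedPrimes_quotSMulTop (hmem u (by simp)) hreg.1
    (notMem_associatedPrimes_of_isSMulRegular (hmem v (by simp)) hreg.2) hc

theorem exists_isSMulRegular_quotient_of_three_le_moduleDepth {J : Ideal R}
    (hR : 2 ≤ moduleDepth R R) (hRJ : maximalIdeal R ∉ associatedPrimes R (R ⧸ J))
    (hJ : 3 ≤ moduleDepth R J) : ∃ u ∈ maximalIdeal R, IsSMulRegular (R ⧸ J) u ∧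
      maximalIdeal R ∉ associatedPrimes R (QuotSMulTop u (R ⧸ J)) := by
  obtain ⟨rs, hlen, hmem, hreg⟩ := exists_isWeaklyRegular_of_le_moduleDepth hJ
  obtain ⟨p₁, p₂, p₃, rfl⟩ := List.length_eq_three.mp hlen
  simp only [List.mem_cons, List.not_mem_nil, or_false, forall_eq_or_imp, forall_eq] at hmem
  obtain ⟨hp₁, hp₂, hp₃⟩ := hmem
  rw [isWeaklyRegular_cons_iff, isWeaklyRegular_cons_iff, isWeaklyRegular_singleton_iff] at hreg
  obtain ⟨u, hu, hureg⟩ := exists_mem_isSMulRegular_of_forall_not_le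
    (M := (R ⧸ J) × R × QuotSMulTop p₂ (QuotSMulTop p₁ J)) (I := maximalIdeal R) <| by
    intro p hp hle
    obtain rfl := ((maximalIdeal.isMaximal R).eq_of_le hp.isPrime.ne_top hle).symm
    rw [associatedPrimes.prod, associatedPrimes.prod] at hp
    rcases hp with hp | hp | hp
    · exact hRJ hp
    · exact maximalIdeal_notMem_associatedPrimes_of_one_le_moduleDepth
        (le_trans (by norm_num) hR) hp
    · exact notMem_associatedPrimes_of_isSMulRegular hp₃ hreg.2.2 hp
  simp only [Prod.isSMulRegular_iff] at hureg
  obtain ⟨hRJu, hRu, hQu⟩ := hureg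
  have hreg' : IsWeaklyRegular J [u, p₁, p₂] := by
    refine IsLocalRing.isWeaklyRegular_of_perm_of_subset_maximalIdeal (rs := [p₁, p₂, u]) ?_
      (List.perm_append_comm (l₁ := [p₁, p₂]) (l₂ := [u]))
      (by simpa only [List.forall_mem_cons] using ⟨hp₁, hp₂, hu, by simp⟩)
    rw [isWeaklyRegular_cons_iff, isWeaklyRegular_cons_iff, isWeaklyRegular_singleton_iff]
    exact ⟨hreg.1, hreg.2.1, hQu⟩
  rw [isWeaklyRegular_cons_iff, isWeaklyRegular_cons_iff, isWeaklyRegular_singleton_iff] at hreg'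
  refine ⟨u, hu, hRJu, notMem_associatedPrimes_quotSMulTop_quotient hRJu
    (maximalIdeal_notMem_associatedPrimes_quotSMulTop_of_two_le_moduleDepth hR hRu) hp₁
    hreg'.2.1 (notMem_associatedPrimes_of_isSMulRegular hp₂ hreg'.2.2)⟩

theorem maximalIdeal_notMem_associatedPrimes_quotient_sup_span_singleton {N : Ideal R} {x : R}
    (hR : 2 ≤ moduleDepth R R) (hN : maximalIdeal R ∉ associatedPrimes R (R ⧸ N))
    (hJ : 3 ≤ moduleDepth R (N.colon {x})) :
    maximalIdeal R ∉ associatedPrimes R (R ⧸ (N ⊔ Ideal.span {x})) := by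
  have hRJ : maximalIdeal R ∉ associatedPrimes R (R ⧸ N.colon {x}) := fun h =>
    hN (associatedPrimes.subset_of_injective (N.quotColonSingletonMap_injective x) h)
  obtain ⟨u, hu, hreg, hQ⟩ := exists_isSMulRegular_quotient_of_three_le_moduleDepth hR hRJ hJ
  exact notMem_associatedPrimes_quotient_sup_span_singleton hu hreg hQ hN

end Depth

section D3

open IsLocalRing

variable {R : Type} [CommRing R] [IsLocalRing R]
  (hD3 : ∀ I : Ideal R, I ≠ ⊥ → Module.IsReflexive R I → 3 ≤ moduleDepth R I)
include hD3

theorem three_le_moduleDepth_self : 3 ≤ moduleDepth R R := by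
  rw [← (Submodule.topEquiv : (⊤ : Ideal R) ≃ₗ[R] R).moduleDepth_eq]
  exact hD3 ⊤ top_ne_bot (Module.equiv Submodule.topEquiv.symm)

theorem maximalIdeal_notMem_associatedPrimes_quotient_span_pair [IsNoetherianRing R]
    [IsDomain R] {a : R} (ha : a ≠ 0) (b : R) :
    maximalIdeal R ∉ associatedPrimes R (R ⧸ Ideal.span {a, b}) := by
  have hR := three_le_moduleDepth_self hD3
  have hspan : a • (⊤ : Submodule R R) = Ideal.span {a} := by
    rw [← Submodule.ideal_span_singleton_smul, smul_eq_mul, Ideal.mul_top]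
  have haJ : a ∈ (Ideal.span {a}).colon {b} := by
    simpa using Ideal.mem_span_singleton'.mpr ⟨b, mul_comm b a⟩
  have hJ : 3 ≤ moduleDepth R ((Ideal.span {a}).colon {b}) :=
    hD3 _ ((Submodule.ne_bot_iff _).mpr ⟨a, haJ, ha⟩)
      (Ideal.isReflexive_span_singleton_colon ha {b})
  have hRa : maximalIdeal R ∉ associatedPrimes R (R ⧸ Ideal.span {a}) := by
    rw [← LinearEquiv.AssociatedPrimes.eq (Submodule.quotEquivOfEq _ _ hspan)]
    exact maximalIdeal_notMem_associatedPrimes_quotSMulTop_of_two_le_moduleDepth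
      (le_trans (by norm_num) hR) (IsSMulRegular.of_ne_zero ha)
  rw [Ideal.span_insert]
  exact maximalIdeal_notMem_associatedPrimes_quotient_sup_span_singleton
    (le_trans (by norm_num) hR) hRa hJ

end D3

theorem stmt12_general (R : Type) [CommRing R] [IsNoetherianRing R] [IsLocalRing R] [IsDomain R]
    (hD3 : ∀ I : Ideal R, I ≠ ⊥ → Module.IsReflexive R I → 3 ≤ moduleDepth R I)
    (x y : R) (n : ℕ) :
    IsLocalRing.maximalIdeal R ∉
      associatedPrimes R (R ⧸ Ideal.span ({x ^ n, y ^ n} : Set R)) := by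
  by_cases hx : x ^ n = 0
  · by_cases hy : y ^ n = 0
    · rw [hx, hy, Set.pair_eq_singleton, Ideal.span_singleton_eq_bot.mpr rfl,
        LinearEquiv.AssociatedPrimes.eq (Submodule.quotEquivOfEqBot ⊥ rfl)]
      exact maximalIdeal_notMem_associatedPrimes_of_one_le_moduleDepth
        (le_trans (by norm_num) (three_le_moduleDepth_self hD3))
    · rw [Set.pair_comm]
      exact maximalIdeal_notMem_associatedPrimes_quotient_span_pair hD3 hy _
  · exact maximalIdeal_notMem_associatedPrimes_quotient_span_pair hD3 hx _

/-- Let `R` be a Noetherian local normal domain of dimension ≥ 3 satisfying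
condition (D3): every nonzero reflexive ideal has depth ≥ 3. If `x, y` are part of a system of
parameters (i.e. `dim R/(x,y) + 2 = dim R`) and `n ≥ 1`, then the maximal ideal is not an
associated prime of `R/(xⁿ, yⁿ)`. -/
theorem stmt12 (R : Type) [CommRing R] [IsNoetherianRing R] [IsLocalRing R] [IsDomain R]
    [IsIntegrallyClosed R] (hdim : 3 ≤ ringKrullDim R)
    (hD3 : ∀ I : Ideal R, I ≠ ⊥ → Module.IsReflexive R I → 3 ≤ moduleDepth R I)
    (x y : R) (hsop : ringKrullDim (R ⧸ Ideal.span ({x, y} : Set R)) + 2 = ringKrullDim R)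
    (n : ℕ) (hn : 1 ≤ n) :
    IsLocalRing.maximalIdeal R ∉
      associatedPrimes R (R ⧸ Ideal.span ({x ^ n, y ^ n} : Set R)) :=
  stmt12_general R hD3 x y n
end
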